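/- For every alphabet Σ, every n ≥ 1, and every k with 0 < k ≤ 2ⁿ, there exist n NFAs with at most six states each (obtained from the counting automata Aᵢ by choosing initial states encoding k−1 in binary) whose parallel composition recognizes a language whose projection to Σ equals Σ^{2ⁿ−k}. -/

import Mathlib

/-!
Read a state of the product that lies in `{0, 1}` in every component as the binary number `c`
(component `i` holding bit `i`). A letter `aⱼ` followed by a letter of `Σ` can be read exactly
when `j` is the lowest zero bit of `c`, and it leads to `c + 1`: component `j` goes `0 → r → 1`,
the components below it go `1 → s → 0`, those above keep their bit through `p` or `q`. Every
other word is blocked, since letters of `Σ` are refused in `0, 1` and letters of `Γ` in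
`p, q, r, s`. So the accepted words from `c` are `aⱼ₁ b₁ ⋯ aⱼₘ bₘ` with arbitrary `bₗ ∈ Σ`
and `m = 2ⁿ - 1 - c` increments up to the all-ones final state; starting at `c = k - 1` gives
`m = 2ⁿ - k`.
-/

/-- An NFA with marked states. -/
structure NFAm (Q E : Type) where
  δ : Q → E → Set Q
  I : Set Q
  F : Set Q

/-- Extended transition function on sets of states. -/
def NFAm.run {Q E : Type} (A : NFAm Q E) : List E → Set Q → Set Q
  | [], S => S
  | a :: w, S => A.run w {q | ∃ p ∈ S, q ∈ A.δ p a}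

/-- The language recognized (marked) by the automaton. -/
def NFAm.Lm {Q E : Type} (A : NFAm Q E) : Set (List E) :=
  {w | (A.run w A.I ∩ A.F).Nonempty}

/-- Fully synchronous product of a family of NFAs over a common alphabet. -/
def prodN {n : ℕ} {E : Type} {Qs : Fin n → Type} (A : ∀ i, NFAm (Qs i) E) :
    NFAm (∀ i, Qs i) E where
  δ := fun p a => {q | ∀ i, q i ∈ (A i).δ (p i) a}
  I := {p | ∀ i, p i ∈ (A i).I}
  F := {p | ∀ i, p i ∈ (A i).F}

/-- Natural projection of a word over `Σ ⊕ Γ` to `Σ` (erasing the `Γ`-events). -/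
def projL {E F : Type} : List (E ⊕ F) → List E :=
  List.filterMap (Sum.elim some fun _ => none)

/-- Natural projection of a word over `Σ ⊕ Γ` to `Γ` (erasing the `Σ`-events). -/
def projR {E F : Type} : List (E ⊕ F) → List F :=
  List.filterMap (Sum.elim (fun _ => none) some)

namespace Nat

def LowestZeroBit (c j : ℕ) : Prop := (∀ i < j, c.testBit i) ∧ c.testBit j = false

theorem LowestZeroBit.div_two {c j : ℕ} (h : LowestZeroBit c (j + 1)) : LowestZeroBit (c / 2) j :=
  ⟨fun i hi => by simpa [testBit_div_two] using h.1 (i + 1) (by omega),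
    by simpa [testBit_div_two] using h.2⟩

theorem LowestZeroBit.testBit_add_one {c j : ℕ} (h : LowestZeroBit c j) (i : ℕ) :
    (c + 1).testBit i = if i < j then false else if i = j then true else c.testBit i := by
  induction j generalizing c i with
  | zero =>
    have hc : c % 2 = 0 := by simpa [testBit_zero] using h.2
    cases i with
    | zero => simp only [testBit_zero, lt_irrefl, if_false, if_true, decide_eq_true_eq]; omega
    | succ i => simp [Nat.testBit_add_one, show (c + 1) / 2 = c / 2 by omega]
  | succ j ih =>
    have hc : c % 2 = 1 := by simpa [testBit_zero] using h.1 0 (by omega)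
    cases i with
    | zero => simp only [testBit_zero, if_pos j.succ_pos, decide_eq_false_iff_not]; omega
    | succ i =>
      rw [Nat.testBit_add_one, show (c + 1) / 2 = c / 2 + 1 by omega, ih h.div_two,
        testBit_div_two]
      simp

theorem eq_two_pow_sub_one_iff {n c : ℕ} (hc : c < 2 ^ n) :
    c = 2 ^ n - 1 ↔ ∀ i < n, c.testBit i := by
  refine ⟨fun h i hi => by simp [h, testBit_two_pow_sub_one, hi], fun h => ?_⟩
  refine eq_of_testBit_eq fun i => ?_
  rw [testBit_two_pow_sub_one]
  by_cases hi : i < n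
  · simp [h i hi, hi]
  · simp only [hi, decide_false]
    exact testBit_lt_two_pow (hc.trans_le (Nat.pow_le_pow_right two_pos (not_lt.mp hi)))

theorem exists_lowestZeroBit_lt {n c : ℕ} (hc : c < 2 ^ n - 1) :
    ∃ j < n, LowestZeroBit c j := by
  have hex : ∃ j, c.testBit j = false := ⟨c, testBit_lt_two_pow Nat.lt_two_pow_self⟩
  refine ⟨Nat.find hex, ?_, fun i hi => by simpa using Nat.find_min hex hi, Nat.find_spec hex⟩
  by_contra! hn
  have := (eq_two_pow_sub_one_iff (show c < 2 ^ n by omega)).2 fun i hi => by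
    simpa using Nat.find_min hex (hi.trans_le hn)
  omega

theorem LowestZeroBit.ne_two_pow_sub_one {n c j : ℕ} (h : LowestZeroBit c j) (hj : j < n) :
    c ≠ 2 ^ n - 1 := by
  rintro rfl
  simpa [testBit_two_pow_sub_one, hj] using h.2

end Nat

namespace NFAm

variable {Q E : Type} (A : NFAm Q E)

def acceptsFrom (S : Set Q) : Set (List E) := {w | (A.run w S ∩ A.F).Nonempty}

theorem Lm_eq_acceptsFrom : A.Lm = A.acceptsFrom A.I := rfl

theorem nil_mem_acceptsFrom {S : Set Q} : [] ∈ A.acceptsFrom S ↔ (S ∩ A.F).Nonempty := Iff.rfl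

theorem run_empty (w : List E) : A.run w ∅ = ∅ := by
  induction w with
  | nil => rfl
  | cons a w ih => simpa [run] using ih

theorem notMem_acceptsFrom_empty (w : List E) : w ∉ A.acceptsFrom ∅ := by
  simp [acceptsFrom, run_empty]

theorem cons_mem_acceptsFrom_singleton {p : Q} {a : E} {w : List E} :
    a :: w ∈ A.acceptsFrom {p} ↔ w ∈ A.acceptsFrom (A.δ p a) := by
  simp [acceptsFrom, run]

end NFAm

section prodN

variable {n : ℕ} {E : Type} {Qs : Fin n → Type} (A : ∀ i, NFAm (Qs i) E)

theorem prodN_step_pi (S : ∀ i, Set (Qs i)) (a : E) :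
    {q | ∃ p ∈ Set.univ.pi S, q ∈ (prodN A).δ p a} =
      Set.univ.pi fun i => {q | ∃ p ∈ S i, q ∈ (A i).δ p a} := by
  ext q
  simp only [prodN, Set.mem_ofPred_eq, Set.mem_univ_pi]
  constructor
  · rintro ⟨p, hp, hq⟩ i
    exact ⟨p i, hp i, hq i⟩
  · intro h
    choose p hp hq using h
    exact ⟨p, hp, hq⟩

theorem prodN_run_pi (w : List E) (S : ∀ i, Set (Qs i)) :
    (prodN A).run w (Set.univ.pi S) = Set.univ.pi fun i => (A i).run w (S i) := by
  induction w generalizing S with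
  | nil => rfl
  | cons a w ih => exact (congrArg _ (prodN_step_pi A S a)).trans (ih _)

theorem prodN_acceptsFrom_pi (S : ∀ i, Set (Qs i)) :
    (prodN A).acceptsFrom (Set.univ.pi S) = ⋂ i, (A i).acceptsFrom (S i) := by
  ext w
  have hF : (prodN A).F = Set.univ.pi fun i => (A i).F := by ext; simp [prodN]
  simp only [NFAm.acceptsFrom, Set.mem_ofPred_eq, Set.mem_iInter, prodN_run_pi, hF,
    ← Set.pi_inter_distrib, Set.univ_pi_nonempty_iff]

end prodN

namespace CountingAutomaton

inductive State | zero | one | p | q | r | s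
deriving DecidableEq

instance : Fintype State :=
  ⟨{.zero, .one, .p, .q, .r, .s}, fun x => by cases x <;> simp⟩

def State.ofBool : Bool → State
  | false => zero
  | true => one

variable (Sig : Type) {n : ℕ}

def step (i : Fin n) : State → Sig ⊕ Fin n → Set State
  | .zero, .inr j => if j < i then {.p} else if j = i then {.r} else ∅
  | .one, .inr j => if j < i then {.q} else if i < j then {.s} else ∅
  | .p, .inl _ | .s, .inl _ => {.zero}
  | .q, .inl _ | .r, .inl _ => {.one}
  | _, _ => ∅

def automaton (m : ℕ) (i : Fin n) : NFAm State (Sig ⊕ Fin n) where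
  δ := step Sig i
  I := {.ofBool (m.testBit i)}
  F := {.one}

variable (n) in
def counter (m : ℕ) : NFAm (Fin n → State) (Sig ⊕ Fin n) := prodN (automaton Sig m)

def config (c : ℕ) (i : Fin n) : State := .ofBool (c.testBit i)

variable {Sig} {m : ℕ} {i j : Fin n} {x : Bool} {b : Sig} {w : List (Sig ⊕ Fin n)}

theorem nil_mem_acceptsFrom : [] ∈ (automaton Sig m i).acceptsFrom {.ofBool x} ↔ x = true := by
  cases x <;> simp [NFAm.nil_mem_acceptsFrom, automaton, State.ofBool]

theorem inl_cons_notMem_acceptsFrom :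
    .inl b :: w ∉ (automaton Sig m i).acceptsFrom {.ofBool x} := by
  cases x <;> simp [NFAm.cons_mem_acceptsFrom_singleton, automaton, step, State.ofBool,
    NFAm.notMem_acceptsFrom_empty]

theorem inr_notMem_acceptsFrom : [.inr j] ∉ (automaton Sig m i).acceptsFrom {.ofBool x} := by
  cases x <;> simp only [automaton, State.ofBool, NFAm.cons_mem_acceptsFrom_singleton, step,
    NFAm.nil_mem_acceptsFrom, Set.inter_singleton_nonempty] <;> split_ifs <;> simp

theorem inr_inr_cons_notMem_acceptsFrom {j' : Fin n} :
    .inr j :: .inr j' :: w ∉ (automaton Sig m i).acceptsFrom {.ofBool x} := by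
  cases x <;> simp only [automaton, State.ofBool, NFAm.cons_mem_acceptsFrom_singleton, step]
    <;> split_ifs <;> simp [NFAm.cons_mem_acceptsFrom_singleton, step,
      NFAm.notMem_acceptsFrom_empty]

theorem inr_inl_cons_mem_acceptsFrom_of_lt (h : j < i) :
    .inr j :: .inl b :: w ∈ (automaton Sig m i).acceptsFrom {.ofBool x} ↔
      w ∈ (automaton Sig m i).acceptsFrom {.ofBool x} := by
  cases x <;> simp [NFAm.cons_mem_acceptsFrom_singleton, automaton, step, State.ofBool, h]

theorem inr_inl_cons_mem_acceptsFrom_self :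
    .inr i :: .inl b :: w ∈ (automaton Sig m i).acceptsFrom {.ofBool x} ↔
      x = false ∧ w ∈ (automaton Sig m i).acceptsFrom {.ofBool true} := by
  cases x <;> simp [NFAm.cons_mem_acceptsFrom_singleton, automaton, step, State.ofBool,
    NFAm.notMem_acceptsFrom_empty]

theorem inr_inl_cons_mem_acceptsFrom_of_gt (h : i < j) :
    .inr j :: .inl b :: w ∈ (automaton Sig m i).acceptsFrom {.ofBool x} ↔
      x = true ∧ w ∈ (automaton Sig m i).acceptsFrom {.ofBool false} := by
  cases x <;> simp [NFAm.cons_mem_acceptsFrom_singleton, automaton, step, State.ofBool, h,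
    h.not_gt, h.ne', NFAm.notMem_acceptsFrom_empty]

variable {c : ℕ}

theorem mem_acceptsFrom_config :
    w ∈ (counter Sig n m).acceptsFrom {config c} ↔
      ∀ i, w ∈ (automaton Sig m i).acceptsFrom {.ofBool (c.testBit i)} := by
  rw [counter, ← Set.univ_pi_singleton, prodN_acceptsFrom_pi, Set.mem_iInter]
  rfl

theorem notMem_acceptsFrom_config (hn : 0 < n)
    (h : ∀ i x, w ∉ (automaton Sig m i).acceptsFrom {.ofBool x}) :
    w ∉ (counter Sig n m).acceptsFrom {config c} :=
  fun hw => h ⟨0, hn⟩ _ (mem_acceptsFrom_config.1 hw _)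

theorem nil_mem_acceptsFrom_config (hc : c < 2 ^ n) :
    [] ∈ (counter Sig n m).acceptsFrom {config c} ↔ c = 2 ^ n - 1 := by
  rw [mem_acceptsFrom_config, Nat.eq_two_pow_sub_one_iff hc]
  simp only [nil_mem_acceptsFrom]
  exact ⟨fun h i hi => h ⟨i, hi⟩, fun h i => h i i.isLt⟩

theorem lowestZeroBit_of_inr_inl_cons_mem_acceptsFrom_config
    (h : .inr j :: .inl b :: w ∈ (counter Sig n m).acceptsFrom {config c}) :
    Nat.LowestZeroBit c j := by
  rw [mem_acceptsFrom_config] at h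
  refine ⟨fun i hi => ?_, (inr_inl_cons_mem_acceptsFrom_self.1 (h j)).1⟩
  have hi' : (⟨i, hi.trans j.isLt⟩ : Fin n) < j := hi
  exact ((inr_inl_cons_mem_acceptsFrom_of_gt hi').1 (h _)).1

theorem inr_inl_cons_mem_acceptsFrom_config_iff (hc : Nat.LowestZeroBit c j) :
    .inr j :: .inl b :: w ∈ (counter Sig n m).acceptsFrom {config c} ↔
      w ∈ (counter Sig n m).acceptsFrom {config (c + 1)} := by
  simp only [mem_acceptsFrom_config]
  refine forall_congr' fun i => ?_
  rw [hc.testBit_add_one]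
  rcases lt_trichotomy i j with hij | rfl | hij
  · have hbit : c.testBit i = true := hc.1 i hij
    rw [inr_inl_cons_mem_acceptsFrom_of_gt hij, if_pos (show (i : ℕ) < j from hij)]
    simp [hbit]
  · simp [inr_inl_cons_mem_acceptsFrom_self, hc.2]
  · rw [inr_inl_cons_mem_acceptsFrom_of_lt hij, if_neg (show ¬ (i : ℕ) < j from
      hij.not_gt), if_neg (show (i : ℕ) ≠ j from Fin.val_ne_of_ne hij.ne')]

theorem length_projL_of_mem_acceptsFrom_config (hn : 0 < n) :
    ∀ (w : List (Sig ⊕ Fin n)) (c : ℕ), c < 2 ^ n →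
      w ∈ (counter Sig n m).acceptsFrom {config c} → (projL w).length = 2 ^ n - 1 - c
  | [], c, hc, hw => by simp [(nil_mem_acceptsFrom_config hc).1 hw, projL]
  | .inl _ :: _, _, _, hw =>
    absurd hw (notMem_acceptsFrom_config hn fun _ _ => inl_cons_notMem_acceptsFrom)
  | [.inr _], _, _, hw =>
    absurd hw (notMem_acceptsFrom_config hn fun _ _ => inr_notMem_acceptsFrom)
  | .inr _ :: .inr _ :: _, _, _, hw =>
    absurd hw (notMem_acceptsFrom_config hn fun _ _ => inr_inr_cons_notMem_acceptsFrom)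
  | .inr j :: .inl b :: w, c, hc, hw => by
    have hj := lowestZeroBit_of_inr_inl_cons_mem_acceptsFrom_config hw
    have hc' := hj.ne_two_pow_sub_one j.isLt
    have ih := length_projL_of_mem_acceptsFrom_config hn w (c + 1) (by omega)
      ((inr_inl_cons_mem_acceptsFrom_config_iff hj).1 hw)
    simp only [projL, List.filterMap_cons, Sum.elim_inl, Sum.elim_inr, List.length_cons] at ih ⊢
    omega

theorem exists_mem_acceptsFrom_config_projL_eq :
    ∀ (u : List Sig) (c : ℕ), c + u.length = 2 ^ n - 1 →
      ∃ w ∈ (counter Sig n m).acceptsFrom {config c}, projL w = u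
  | [], c, hc => by
    rw [List.length_nil, add_zero] at hc
    have := Nat.two_pow_pos n
    exact ⟨[], (nil_mem_acceptsFrom_config (by omega)).2 hc, rfl⟩
  | b :: u, c, hc => by
    rw [List.length_cons] at hc
    obtain ⟨j, hjn, hj⟩ := Nat.exists_lowestZeroBit_lt (n := n) (c := c) (by omega)
    obtain ⟨w, hw, rfl⟩ := exists_mem_acceptsFrom_config_projL_eq u (c + 1) (by omega)
    refine ⟨.inr ⟨j, hjn⟩ :: .inl b :: w, (inr_inl_cons_mem_acceptsFrom_config_iff hj).2 hw, ?_⟩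
    simp [projL, List.filterMap_cons]

theorem projL_image_Lm (hn : 0 < n) (hm : m < 2 ^ n) :
    projL '' (counter Sig n m).Lm = {u | u.length = 2 ^ n - 1 - m} := by
  have hI : (counter Sig n m).I = {config m} := by
    rw [← Set.univ_pi_singleton]; ext; simp [counter, prodN, automaton, config]
  ext u
  rw [NFAm.Lm_eq_acceptsFrom, hI]
  constructor
  · rintro ⟨w, hw, rfl⟩
    exact length_projL_of_mem_acceptsFrom_config hn w m hm hw
  · intro hu
    have hlen : m + u.length = 2 ^ n - 1 := by simp only [Set.mem_ofPred_eq] at hu; omega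
    exact exists_mem_acceptsFrom_config_projL_eq u m hlen

end CountingAutomaton

theorem six_state_counting_automata_offset_general {Sig : Type}
    (n k : ℕ) (hn : 1 ≤ n) (hk1 : 0 < k) (hk2 : k ≤ 2 ^ n) :
    ∃ (Qs : Fin n → Type) (inst : ∀ i, Fintype (Qs i)),
      (∀ i, @Fintype.card (Qs i) (inst i) ≤ 6) ∧
      ∃ A : ∀ i, NFAm (Qs i) (Sig ⊕ Fin n),
        projL '' (prodN A).Lm = {w : List Sig | w.length = 2 ^ n - k} := by
  refine ⟨fun _ => CountingAutomaton.State, fun _ => inferInstance, fun _ => le_of_eq rfl,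
    CountingAutomaton.automaton Sig (k - 1), ?_⟩
  rw [← CountingAutomaton.counter, CountingAutomaton.projL_image_Lm hn (by omega)]
  congr! 3
  omega

/-- for every (finite nonempty) alphabet `Sig`, every `n ≥ 1` and
every `k` with `0 < k ≤ 2ⁿ`, there exist `n` NFAs with at most six states each
(obtained from the counting automata by choosing the initial states to encode
`k - 1` in binary) whose parallel composition recognizes a language whose
projection to `Sig` equals `Sig^{2ⁿ - k}`. -/
theorem six_state_counting_automata_offset {Sig : Type} [Fintype Sig] [Nonempty Sig]
    (n k : ℕ) (hn : 1 ≤ n) (hk1 : 0 < k) (hk2 : k ≤ 2 ^ n) :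
    ∃ (Qs : Fin n → Type) (inst : ∀ i, Fintype (Qs i)),
      (∀ i, @Fintype.card (Qs i) (inst i) ≤ 6) ∧
      ∃ A : ∀ i, NFAm (Qs i) (Sig ⊕ Fin n),
        projL '' (prodN A).Lm = {w : List Sig | w.length = 2 ^ n - k} :=
  six_state_counting_automata_offset_general n k hn hk1 hk2
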